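/- arXiv:2305.14667 — 2 statements merged into one kernel-verified Lean document; each statement's English description precedes it below -/
import Mathlib

section
/- Let 0 < α < 1 be irrational and let c be a real number. If c · cos(nπα) · (2 sin(nπα))^(N-1) tends to 0 as n → ∞ (over natural numbers n), where N ≥ 1 is a fixed positive integer, then c = 0. -/
/-!
In a compact group every point of the closure of `{m • a | m : ℤ}` is a cluster point of the
forward orbit `n • a`, `n : ℕ`. For irrational `α` the multiples of `α` are dense in `ℝ ⧸ 2ℤ`, so a
continuous `2`-periodic function tending to `0` along `n * α` vanishes identically. The function
`c * cos (π x) * (2 sin (π x)) ^ (N - 1)` is such a function, and at `x = 1 / 4` it equals `c`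
times a positive number.
-/

open Filter Real Topology

section CompactAddGroup

variable {G : Type*} [AddGroup G] [TopologicalSpace G] [CompactSpace G] [IsTopologicalAddGroup G]
  {a : G}

theorem mapClusterPt_atTop_nsmul_of_denseRange_zsmul (ha : DenseRange (· • a : ℤ → G)) (x : G) :
    MapClusterPt x atTop (· • a : ℕ → G) :=
  ((mapClusterPt_atTop_nsmul_tfae x a).out 0 3).2 (ha x)

theorem eq_of_tendsto_comp_nsmul_of_denseRange_zsmul {Y : Type*} [TopologicalSpace Y] [T2Space Y]
    (ha : DenseRange (· • a : ℤ → G)) {f : G → Y} (hf : Continuous f) {y : Y}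
    (h : Tendsto (fun n : ℕ => f (n • a)) atTop (𝓝 y)) (x : G) : f x = y := by
  have hfx : MapClusterPt (f x) atTop (fun n : ℕ => f (n • a)) :=
    (mapClusterPt_atTop_nsmul_of_denseRange_zsmul ha x).continuousAt_comp hf.continuousAt
  exact eq_of_nhds_neBot (ClusterPt.mono hfx h)

end CompactAddGroup

theorem Function.Periodic.eq_of_tendsto_comp_natCast_mul {Y : Type*} [TopologicalSpace Y]
    [T2Space Y] {f : ℝ → Y} {p : ℝ} (hf : Function.Periodic f p) (hp : 0 < p)
    (hcont : Continuous f) {α : ℝ} (hα : Irrational (α / p)) {y : Y}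
    (h : Tendsto (fun n : ℕ => f (n * α)) atTop (𝓝 y)) (x : ℝ) : f x = y := by
  have : Fact (0 < p) := ⟨hp⟩
  have hlift : Tendsto (fun n : ℕ => hf.lift (n • (α : AddCircle p))) atTop (𝓝 y) := by
    simpa only [← AddCircle.coe_nsmul, nsmul_eq_mul, hf.lift_coe] using h
  exact eq_of_tendsto_comp_nsmul_of_denseRange_zsmul (AddCircle.denseRange_zsmul_coe_iff.2 hα)
    (hcont.quotient_liftOn' _) hlift x

theorem eq_zero_of_tendsto_cos_sin_pow_irrational_general
    (α : ℝ) (hirr : Irrational α)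
    (N : ℕ) (c : ℝ)
    (h : Tendsto (fun n : ℕ =>
        c * Real.cos (n * Real.pi * α) * (2 * Real.sin (n * Real.pi * α)) ^ (N - 1))
      atTop (nhds 0)) :
    c = 0 := by
  set f : ℝ → ℝ := fun x => c * cos (π * x) * (2 * sin (π * x)) ^ (N - 1)
  have hf : Function.Periodic f 2 := fun x => by
    simp only [f, mul_add, mul_comm π 2, cos_add_two_pi, sin_add_two_pi]
  have hquarter : f (1 / 4) = 0 :=
    hf.eq_of_tendsto_comp_natCast_mul two_pos (by fun_prop) (hirr.div_natCast two_ne_zero)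
      (h.congr fun n => by simp only [f]; ring_nf) (1 / 4)
  simp only [f, mul_one_div, cos_pi_div_four, sin_pi_div_four] at hquarter
  simpa [(sqrt_pos.2 two_pos).ne'] using hquarter

theorem eq_zero_of_tendsto_cos_sin_pow_irrational
    (α : ℝ) (hα0 : 0 < α) (hα1 : α < 1) (hirr : Irrational α)
    (N : ℕ) (hN : 1 ≤ N) (c : ℝ)
    (h : Tendsto (fun n : ℕ =>
        c * Real.cos (n * Real.pi * α) * (2 * Real.sin (n * Real.pi * α)) ^ (N - 1))
      atTop (nhds 0)) :
    c = 0 :=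
  eq_zero_of_tendsto_cos_sin_pow_irrational_general α hirr N c h
end

section
/- For κ > 0 and √λ = iκ, the function ω₀(-κ²) = (iκ)^N[(-αa/2)^N (sin(iκπ(α+1)/2)+sin(iκπ(α-1)/2))^N + (-a^{-1}/2)^N (sin(iκπ(α+1)/2)-sin(iκπ(α-1)/2))^N] satisfies ω₀(-κ²) = κ^N e^{κNπ(1+α)/2}[(αa/4)^N + (a^{-1}/4)^N](1+o(1)) as κ → +∞. -/
/-! With `x = κπα/2` and `y = κπ/2`, the two sine arguments are `(x ± y) i`, and since
`sin (θ i) = i sinh θ` the addition formulas give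
`sin ((x + y) i) ± sin ((x - y) i) = 2i sinh x cosh y`, resp. `2i cosh x sinh y`.
Hence `ω₀(-κ²) = κ^N ((αa sinh x cosh y)^N + (a⁻¹ cosh x sinh y)^N)`, and since
`sinh θ / e^θ` and `cosh θ / e^θ` both tend to `1/2`, dividing by `κ^N e^{N(x+y)}` leaves a
quantity tending to `(αa/4)^N + (a⁻¹/4)^N`, which is nonzero. -/

open Filter Complex Topology

theorem Real.tendsto_sinh_div_exp_atTop :
    Tendsto (fun x => Real.sinh x / Real.exp x) atTop (𝓝 (1 / 2)) := by
  have h := ((tendsto_const_nhds (x := (1 : ℝ))).sub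
    (Real.tendsto_exp_neg_atTop_nhds_zero.pow 2)).div_const 2
  convert h using 2 with x
  · rw [Real.sinh_eq, Real.exp_neg]
    field_simp
  · norm_num

theorem Real.tendsto_cosh_div_exp_atTop :
    Tendsto (fun x => Real.cosh x / Real.exp x) atTop (𝓝 (1 / 2)) := by
  have h := ((tendsto_const_nhds (x := (1 : ℝ))).add
    (Real.tendsto_exp_neg_atTop_nhds_zero.pow 2)).div_const 2
  convert h using 2 with x
  · rw [Real.cosh_eq, Real.exp_neg]
    field_simp
  · norm_num

theorem tendsto_sinh_cosh_div_exp_pow_add {s t : ℝ} (hs : 0 < s) (ht : 0 < t) (p q : ℝ)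
    (N : ℕ) :
    Tendsto (fun κ : ℝ =>
        (p * (Real.sinh (κ * s) / Real.exp (κ * s) * (Real.cosh (κ * t) / Real.exp (κ * t)))) ^ N +
        (q * (Real.cosh (κ * s) / Real.exp (κ * s) * (Real.sinh (κ * t) / Real.exp (κ * t)))) ^ N)
      atTop (𝓝 ((p / 4) ^ N + (q / 4) ^ N)) := by
  have hs' := tendsto_id.atTop_mul_const hs
  have ht' := tendsto_id.atTop_mul_const ht
  have h := (((tendsto_const_nhds (x := p)).mul ((Real.tendsto_sinh_div_exp_atTop.comp hs').mul
    (Real.tendsto_cosh_div_exp_atTop.comp ht'))).pow N).add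
    (((tendsto_const_nhds (x := q)).mul ((Real.tendsto_cosh_div_exp_atTop.comp hs').mul
    (Real.tendsto_sinh_div_exp_atTop.comp ht'))).pow N)
  simp only [Function.comp_def, id] at h
  convert h using 2
  ring

namespace Complex

theorem sin_add_mul_I_add_sin_sub_mul_I (x y : ℂ) :
    sin ((x + y) * I) + sin ((x - y) * I) = 2 * I * sinh x * cosh y := by
  simp only [add_mul, sub_mul, sin_add, sin_sub, sin_mul_I, cos_mul_I]
  ring

theorem sin_add_mul_I_sub_sin_sub_mul_I (x y : ℂ) :
    sin ((x + y) * I) - sin ((x - y) * I) = 2 * I * cosh x * sinh y := by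
  simp only [add_mul, sub_mul, sin_add, sin_sub, sin_mul_I, cos_mul_I]
  ring

theorem I_mul_pow_mul_sin_add_sin_sub (κ p q x y : ℂ) (N : ℕ) :
    (I * κ) ^ N * ((-p / 2) ^ N * (sin ((x + y) * I) + sin ((x - y) * I)) ^ N +
      (-q / 2) ^ N * (sin ((x + y) * I) - sin ((x - y) * I)) ^ N) =
      κ ^ N * ((p * sinh x * cosh y) ^ N + (q * cosh x * sinh y) ^ N) := by
  rw [sin_add_mul_I_add_sin_sub_mul_I, sin_add_mul_I_sub_sin_sub_mul_I, mul_add, mul_add,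
    ← mul_assoc, ← mul_assoc, ← mul_pow, ← mul_pow, ← mul_pow, ← mul_pow, ← mul_pow, ← mul_pow]
  congr 2
  · linear_combination -(p * κ * sinh x * cosh y * I_sq)
  · linear_combination -(q * κ * cosh x * sinh y * I_sq)

end Complex

theorem omega0_asymptotics_general (a α : ℝ) (ha : 0 < a) (hα0 : 0 < α) (N : ℕ) :
    Tendsto (fun κ : ℝ =>
        ((Complex.I * κ) ^ N *
            (((-(α * a) : ℂ) / 2) ^ N *
                (Complex.sin (Complex.I * κ * Real.pi * (α + 1) / 2) +
                  Complex.sin (Complex.I * κ * Real.pi * (α - 1) / 2)) ^ N +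
              ((-(a : ℂ)⁻¹) / 2) ^ N *
                (Complex.sin (Complex.I * κ * Real.pi * (α + 1) / 2) -
                  Complex.sin (Complex.I * κ * Real.pi * (α - 1) / 2)) ^ N)) /
          ((κ : ℂ) ^ N * Complex.exp (κ * N * Real.pi * (1 + α) / 2) *
            (((α * a / 4 : ℝ) : ℂ) ^ N + ((a⁻¹ / 4 : ℝ) : ℂ) ^ N)))
      atTop (nhds 1) := by
  set C : ℂ := ((α * a / 4 : ℝ) : ℂ) ^ N + ((a⁻¹ / 4 : ℝ) : ℂ) ^ N
  have hC : C ≠ 0 := by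
    simp only [C, ← ofReal_pow, ← ofReal_add]
    exact ofReal_ne_zero.mpr (by positivity)
  have hlim := (tendsto_sinh_cosh_div_exp_pow_add (s := Real.pi * α / 2) (t := Real.pi / 2)
    (by positivity) (by positivity) (α * a) a⁻¹ N).ofReal.div_const C
  rw [ofReal_add, ofReal_pow, ofReal_pow, div_self hC] at hlim
  push_cast at hlim
  refine hlim.congr' ?_
  filter_upwards [eventually_ne_atTop 0] with κ hκ
  rw [show I * κ * Real.pi * (α + 1) / 2 =
      ((κ : ℂ) * (Real.pi * α / 2) + κ * (Real.pi / 2)) * I by ring,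
    show I * κ * Real.pi * (α - 1) / 2 =
      ((κ : ℂ) * (Real.pi * α / 2) - κ * (Real.pi / 2)) * I by ring,
    show (κ * N * Real.pi * (1 + α) / 2 : ℂ) =
      N * ((κ : ℂ) * (Real.pi * α / 2) + κ * (Real.pi / 2)) by ring,
    exp_nat_mul, exp_add, I_mul_pow_mul_sin_add_sin_sub, mul_assoc ((κ : ℂ) ^ N),
    mul_div_mul_left _ _ (pow_ne_zero _ (ofReal_ne_zero.mpr hκ)), ← div_div]
  congr 1
  rw [add_div, ← div_pow, ← div_pow]
  ring

theorem omega0_asymptotics (a α : ℝ) (ha : 0 < a) (hα0 : 0 < α) (hα1 : α < 1)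
    (N : ℕ) (hN : 1 ≤ N) :
    Tendsto (fun κ : ℝ =>
        ((Complex.I * κ) ^ N *
            (((-(α * a) : ℂ) / 2) ^ N *
                (Complex.sin (Complex.I * κ * Real.pi * (α + 1) / 2) +
                  Complex.sin (Complex.I * κ * Real.pi * (α - 1) / 2)) ^ N +
              ((-(a : ℂ)⁻¹) / 2) ^ N *
                (Complex.sin (Complex.I * κ * Real.pi * (α + 1) / 2) -
                  Complex.sin (Complex.I * κ * Real.pi * (α - 1) / 2)) ^ N)) /
          ((κ : ℂ) ^ N * Complex.exp (κ * N * Real.pi * (1 + α) / 2) *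
            (((α * a / 4 : ℝ) : ℂ) ^ N + ((a⁻¹ / 4 : ℝ) : ℂ) ^ N)))
      atTop (nhds 1) :=
  omega0_asymptotics_general a α ha hα0 N
end
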